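/- Let a : Fin n → ℝ be a positive nondecreasing sequence, k ≥ 2, ε ∈ (0,1), and suppose a_v > (1+ε)·a_{v-k+1} for all v with k ≤ v ≤ n. Let c ≥ 1 and v be such that a_{v-i(k-1)} < (1+ε)^{-i}·a_v holds for all applicable i. Then the sum of a_j over all j ≤ v - c(k-1) satisfies Σ_{j=1}^{v-c(k-1)} a_j ≤ (k-1)·a_v / (ε·(1+ε)^{c-1}). -/

import Mathlib

/-- Geometric-series bound on the sum of the small elements:
Σ_{j=1}^{v-c(k-1)} a_j ≤ (k-1)·a_v / (ε·(1+ε)^{c-1}). (1-based indexing; an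
empty range sums to 0.) -/
theorem stmt6 (n k : ℕ) (ε : ℝ) (hε : ε ∈ Set.Ioo (0 : ℝ) 1) (hk : 2 ≤ k)
    (a : ℕ → ℝ)
    (hpos : ∀ j, 1 ≤ j → j ≤ n → 0 < a j)
    (hmono : ∀ i j, 1 ≤ i → i ≤ j → j ≤ n → a i ≤ a j)
    (hsparse : ∀ v, k ≤ v → v ≤ n → (1 + ε) * a (v - k + 1) < a v)
    (c v : ℕ) (hc : 1 ≤ c) (hv1 : k ≤ v) (hv2 : v ≤ n)
    (hdecay : ∀ i, 1 ≤ i → i * (k - 1) + 1 ≤ v →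
      a (v - i * (k - 1)) < ((1 + ε)⁻¹) ^ i * a v) :
    ∑ j ∈ Finset.Icc 1 (v - c * (k - 1)), a j
      ≤ ((k : ℝ) - 1) * a v / (ε * (1 + ε) ^ (c - 1)) := by
  obtain ⟨hε0, hε1⟩ := hε
  have hx : (0:ℝ) < 1 + ε := by linarith
  have hav : 0 < a v := hpos v (by omega) hv2
  have hk1 : (1:ℝ) ≤ (k:ℝ) - 1 := by
    have : (2:ℝ) ≤ (k:ℝ) := by exact_mod_cast hk
    linarith
  have hT0 : ∀ d : ℕ, 0 ≤ ((k : ℝ) - 1) * a v / (ε * (1 + ε) ^ d) := by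
    intro d
    apply div_nonneg
    · nlinarith
    · positivity
  suffices H : ∀ m c, 1 ≤ c → v - c * (k - 1) ≤ m →
      ∑ j ∈ Finset.Icc 1 (v - c * (k - 1)), a j
        ≤ ((k : ℝ) - 1) * a v / (ε * (1 + ε) ^ (c - 1)) from H _ c hc le_rfl
  intro m
  induction m with
  | zero =>
    intro c hc hm
    have h0 : v - c * (k - 1) = 0 := by omega
    rw [h0]
    simpa using hT0 (c - 1)
  | succ m ih =>
    intro c hc hm
    by_cases h0 : v - c * (k - 1) = 0
    · rw [h0]; simpa using hT0 (c - 1)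
    · set m1 := v - c * (k - 1) with hm1
      set m2 := v - (c + 1) * (k - 1) with hm2
      have hcc : (c + 1) * (k - 1) = c * (k - 1) + (k - 1) := by ring
      have hm2m : m2 ≤ m := by omega
      have hm2m1 : m2 ≤ m1 := by omega
      have hdiff : m1 - m2 ≤ k - 1 := by omega
      have hm1v : m1 ≤ v := by omega
      -- split the sum
      have hsplit : ∑ j ∈ Finset.Icc 1 m1, a j
          = ∑ j ∈ Finset.Icc 1 m2, a j + ∑ j ∈ Finset.Ioc m2 m1, a j := by
        rw [show Finset.Icc 1 m1 = Finset.Ioc 0 m1 from by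
              rw [← Finset.Icc_add_one_left_eq_Ioc]; rfl,
            show Finset.Icc 1 m2 = Finset.Ioc 0 m2 from by
              rw [← Finset.Icc_add_one_left_eq_Ioc]; rfl]
        exact (Finset.sum_Ioc_consecutive _ (Nat.zero_le m2) hm2m1).symm
      -- decay bound at m1
      have hdec : a m1 < ((1 + ε)⁻¹) ^ c * a v := by
        have := hdecay c hc (by omega)
        simpa [hm1] using this
      -- block bound
      have hblock : ∑ j ∈ Finset.Ioc m2 m1, a j
          ≤ ((k:ℝ) - 1) * (((1 + ε)⁻¹) ^ c * a v) := by
        have hcard : (Finset.Ioc m2 m1).card = m1 - m2 := Nat.card_Ioc m2 m1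
        have hterm : ∀ j ∈ Finset.Ioc m2 m1, a j ≤ ((1 + ε)⁻¹) ^ c * a v := by
          intro j hj
          rw [Finset.mem_Ioc] at hj
          have h1j : 1 ≤ j := by omega
          have hle : a j ≤ a m1 := hmono j m1 h1j hj.2 (by omega)
          linarith
        calc ∑ j ∈ Finset.Ioc m2 m1, a j
            ≤ (Finset.Ioc m2 m1).card • (((1 + ε)⁻¹) ^ c * a v) :=
              Finset.sum_le_card_nsmul _ _ _ hterm
          _ = ((m1 - m2 : ℕ) : ℝ) * (((1 + ε)⁻¹) ^ c * a v) := by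
              rw [hcard, nsmul_eq_mul]
          _ ≤ ((k:ℝ) - 1) * (((1 + ε)⁻¹) ^ c * a v) := by
              apply mul_le_mul_of_nonneg_right
              · have : ((m1 - m2 : ℕ) : ℝ) ≤ ((k - 1 : ℕ) : ℝ) := by
                  exact_mod_cast hdiff
                have hkcast : ((k - 1 : ℕ) : ℝ) = (k:ℝ) - 1 := by
                  have : (1:ℕ) ≤ k := by omega
                  push_cast [this]; ring
                linarith
              · positivity
      -- inductive bound on the tail
      have hih := ih (c + 1) (by omega) hm2m
      -- arithmetic identity
      have hid : ((k : ℝ) - 1) * a v / (ε * (1 + ε) ^ ((c + 1) - 1))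
          + ((k:ℝ) - 1) * (((1 + ε)⁻¹) ^ c * a v)
          = ((k : ℝ) - 1) * a v / (ε * (1 + ε) ^ (c - 1)) := by
        obtain ⟨d, rfl⟩ : ∃ d, c = d + 1 := ⟨c - 1, by omega⟩
        have hxne : (1 + ε) ≠ 0 := ne_of_gt hx
        have hεne : ε ≠ 0 := ne_of_gt hε0
        simp only [Nat.add_sub_cancel]
        rw [inv_pow]
        field_simp
        ring
      calc ∑ j ∈ Finset.Icc 1 m1, a j
          = ∑ j ∈ Finset.Icc 1 m2, a j + ∑ j ∈ Finset.Ioc m2 m1, a j := hsplit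
        _ ≤ ((k : ℝ) - 1) * a v / (ε * (1 + ε) ^ ((c + 1) - 1))
            + ((k:ℝ) - 1) * (((1 + ε)⁻¹) ^ c * a v) := by
            exact add_le_add hih hblock
        _ = ((k : ℝ) - 1) * a v / (ε * (1 + ε) ^ (c - 1)) := hid
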